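/- arXiv:1509.08039 — 2 statements merged into one kernel-verified Lean document; each statement's English description precedes it below -/
import Mathlib

section
/- A self-map f of an infinite set Ω is a near-bijection if and only if both the monoset Ω_f and the range f(Ω) are cofinite. -/
/-!
A bijection `A → B` between cofinite sets can only collide points of `A` with the finitely many
points outside `A`, so the non-monoset is finite, and its range contains `B`. Conversely, `f` is
injective on its monoset, and the image of the monoset misses only the image of the (finite)
non-monoset and the (finite) complement of the range.
-/

variable {Ω : Type*}

def monoset (f : Ω → Ω) : Set Ω := {ω | f ⁻¹' {f ω} = {ω}}

def NearBijection (f : Ω → Ω) : Prop :=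
  ∃ A B : Set Ω, Aᶜ.Finite ∧ Bᶜ.Finite ∧ Set.BijOn f A B

def AlmostEq (f g : Ω → Ω) : Prop := {ω | f ω ≠ g ω}.Finite

noncomputable def ind (f : Ω → Ω) : ℤ :=
  (((monoset f)ᶜ.ncard : ℤ) - ((f '' (monoset f)ᶜ).ncard : ℤ)) - ((Set.range f)ᶜ.ncard : ℤ)

section Monoset

variable {f : Ω → Ω} {A : Set Ω}

theorem mem_monoset_iff {ω : Ω} : ω ∈ monoset f ↔ ∀ ω', f ω' = f ω → ω' = ω := by
  simp only [monoset, Set.mem_ofPred_eq, Set.eq_singleton_iff_unique_mem, Set.mem_preimage,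
    Set.mem_singleton_iff, true_and]

theorem injOn_monoset (f : Ω → Ω) : Set.InjOn f (monoset f) :=
  fun _ ha _ _ hab => (mem_monoset_iff.mp ha _ hab.symm).symm

theorem compl_image_monoset_subset (f : Ω → Ω) :
    (f '' monoset f)ᶜ ⊆ f '' (monoset f)ᶜ ∪ (Set.range f)ᶜ := by
  intro x hx
  by_cases hxr : x ∈ Set.range f
  · obtain ⟨a, rfl⟩ := hxr
    exact Or.inl (Set.mem_image_of_mem f fun ha => hx (Set.mem_image_of_mem f ha))
  · exact Or.inr hxr

theorem compl_monoset_subset_of_injOn (hA : Set.InjOn f A) :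
    (monoset f)ᶜ ⊆ (A ∩ f ⁻¹' (f '' Aᶜ)) ∪ Aᶜ := by
  intro ω hω
  by_cases hωA : ω ∈ A
  · obtain ⟨ω', hω', hne⟩ : ∃ ω', f ω' = f ω ∧ ω' ≠ ω := by
      simpa [mem_monoset_iff] using hω
    have hω'A : ω' ∉ A := fun h => hne (hA h hωA hω')
    exact Or.inl ⟨hωA, ω', hω'A, hω'⟩
  · exact Or.inr hωA

theorem finite_compl_monoset_of_injOn (hA : Set.InjOn f A) (hAc : Aᶜ.Finite) :
    (monoset f)ᶜ.Finite := by
  refine ((Set.Finite.union ?_ hAc).subset (compl_monoset_subset_of_injOn hA))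
  refine Set.Finite.of_finite_image ?_ (hA.mono Set.inter_subset_left)
  exact (hAc.image f).subset (Set.image_subset_iff.mpr Set.inter_subset_right)

end Monoset

theorem NearBijection.finite_compl_monoset {f : Ω → Ω} (hf : NearBijection f) :
    (monoset f)ᶜ.Finite :=
  let ⟨_, _, hA, _, hbij⟩ := hf
  finite_compl_monoset_of_injOn hbij.injOn hA

theorem NearBijection.finite_compl_range {f : Ω → Ω} (hf : NearBijection f) :
    (Set.range f)ᶜ.Finite :=
  let ⟨_, _, _, hB, hbij⟩ := hf
  hB.subset (Set.compl_subset_compl.mpr hbij.surjOn.subset_range)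

theorem nearBijection_of_finite_compl {f : Ω → Ω} (hm : (monoset f)ᶜ.Finite)
    (hr : (Set.range f)ᶜ.Finite) : NearBijection f :=
  ⟨monoset f, f '' monoset f, hm, ((hm.image f).union hr).subset (compl_image_monoset_subset f),
    (injOn_monoset f).bijOn_image⟩

theorem stmt6_general (f : Ω → Ω) :
    NearBijection f ↔ (monoset f)ᶜ.Finite ∧ (Set.range f)ᶜ.Finite :=
  ⟨fun hf => ⟨hf.finite_compl_monoset, hf.finite_compl_range⟩,
    fun ⟨hm, hr⟩ => nearBijection_of_finite_compl hm hr⟩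

theorem stmt6 [Infinite Ω] (f : Ω → Ω) :
    NearBijection f ↔ (monoset f)ᶜ.Finite ∧ (Set.range f)ᶜ.Finite :=
  stmt6_general f
end

section
/- If f : Ω → Ω is almost equal to a bijection, then |Ω \ Ω_f| − |f(Ω \ Ω_f)| = |Ω \ f(Ω)|; equivalently, the index ind(f) = (|Ω \ Ω_f| − |f(Ω \ Ω_f)|) − |Ω \ f(Ω)| vanishes. -/
variable {Ω : Type*}

/-!
Let `D` be the finite set where `f` and `g` disagree and `F = D ∪ g⁻¹(f(D))`. Then `F` is finite,
contains every point of `Ω \ Ω_f`, agrees with `g` off `F`, and `f(F) ⊆ g(F)`; hence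
`Ω \ f(Ω) = g(F) \ f(F)` has `|F| - |f(F)|` elements. Since `f` is injective on `Ω_f` and the
images of `Ω_f` and its complement are disjoint, `|f(F)| = |F ∩ Ω_f| + |f(Ω \ Ω_f)|`, which gives
`|Ω \ f(Ω)| = |Ω \ Ω_f| - |f(Ω \ Ω_f)|`.
-/

open Set

section monoset

variable {f : Ω → Ω}

theorem injOn_monoset_s16 : InjOn f (monoset f) := by
  intro a _ b hb hab
  have ha : a ∈ f ⁻¹' {f b} := hab
  rwa [hb] at ha

theorem disjoint_image_monoset_image_compl :
    Disjoint (f '' monoset f) (f '' (monoset f)ᶜ) := by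
  rw [disjoint_left]
  rintro _ ⟨a, ha, rfl⟩ ⟨b, hb, hab⟩
  have hb' : b ∈ f ⁻¹' {f a} := hab
  rw [ha] at hb'
  exact hb (hb' ▸ ha)

theorem ncard_image_add_ncard_compl_monoset {F : Set Ω} (hF : F.Finite)
    (hM : (monoset f)ᶜ ⊆ F) :
    (f '' F).ncard + (monoset f)ᶜ.ncard = F.ncard + (f '' (monoset f)ᶜ).ncard := by
  have hsplit : F ∩ monoset f ∪ (monoset f)ᶜ = F := by
    rw [← inter_eq_right.mpr hM, ← sdiff_eq, inter_union_sdiff]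
  have hdisj : Disjoint (F ∩ monoset f) (monoset f)ᶜ :=
    disjoint_compl_right.mono_left inter_subset_right
  have hFM : (F ∩ monoset f).Finite := hF.subset inter_subset_left
  have hMc : (monoset f)ᶜ.Finite := hF.subset hM
  have hdom : F.ncard = (F ∩ monoset f).ncard + (monoset f)ᶜ.ncard := by
    rw [← ncard_union_eq hdisj hFM hMc, hsplit]
  have himage : (f '' F).ncard = (F ∩ monoset f).ncard + (f '' (monoset f)ᶜ).ncard := by
    rw [← (injOn_monoset_s16.mono inter_subset_right).ncard_image,
      ← ncard_union_eq (disjoint_image_monoset_image_compl.mono_left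
        (image_mono inter_subset_right)) (hFM.image f) (hMc.image f), ← image_union, hsplit]
  omega

end monoset

theorem ncard_compl_range_add_ncard_image {f g : Ω → Ω} (hg : Function.Bijective g)
    {F : Set Ω} (hF : F.Finite) (hfg : EqOn f g Fᶜ) (hsub : f '' F ⊆ g '' F) :
    (range f)ᶜ.ncard + (f '' F).ncard = F.ncard := by
  have hrange : (range f)ᶜ = g '' F \ f '' F := by
    rw [← image_univ, ← union_compl_self F, image_union, hfg.image_eq, image_compl_eq hg,
      compl_union, compl_compl, inter_comm, sdiff_eq]
  have hle := ncard_le_ncard hsub (hF.image g)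
  rw [hrange, ncard_sdiff hsub ((hF.image g).subset hsub)]
  rw [hg.injective.injOn.ncard_image] at hle ⊢
  omega

theorem AlmostEq.exists_finite_compl_monoset_subset {f g : Ω → Ω} (hg : Function.Bijective g)
    (h : AlmostEq f g) :
    ∃ F : Set Ω, F.Finite ∧ (monoset f)ᶜ ⊆ F ∧ EqOn f g Fᶜ ∧ f '' F ⊆ g '' F := by
  set D := {ω | f ω ≠ g ω}
  have hD : D.Finite := h
  refine ⟨D ∪ g ⁻¹' (f '' D), hD.union ((hD.image f).preimage hg.injective.injOn), ?_, ?_, ?_⟩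
  · intro ω hω
    by_contra hωF
    obtain ⟨hfgω, hgω⟩ : f ω = g ω ∧ g ω ∉ f '' D := by simpa [D, not_or] using hωF
    -- a second preimage `b ≠ ω` of `f ω` must lie in `D`, as `g` is injective
    obtain ⟨b, hfb, hbω⟩ : ∃ b, f b = f ω ∧ b ≠ ω := by
      by_contra! hall
      exact hω (Set.ext fun b => ⟨hall b, fun hb => (mem_singleton_iff.mp hb) ▸ rfl⟩)
    have hbD : b ∈ D := fun hfgb => hbω (hg.injective (hfgb ▸ hfb.trans hfgω))
    exact hgω ⟨b, hbD, hfb.trans hfgω⟩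
  · exact fun ω hω => by_contra fun hne => hω (Or.inl hne)
  · rintro _ ⟨ω, hωF, rfl⟩
    by_cases hωD : ω ∈ D
    · obtain ⟨y, hy⟩ := hg.surjective (f ω)
      exact ⟨y, Or.inr ⟨ω, hωD, hy.symm⟩, hy⟩
    · exact ⟨ω, hωF, (not_not.mp hωD).symm⟩

theorem stmt16_general (f g : Ω → Ω) (hg : Function.Bijective g)
    (h : AlmostEq f g) :
    (((monoset f)ᶜ.ncard : ℤ) - ((f '' (monoset f)ᶜ).ncard : ℤ)) =
      ((Set.range f)ᶜ.ncard : ℤ) ∧ ind f = 0 := by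
  obtain ⟨F, hF, hMF, hfg, hsub⟩ := h.exists_finite_compl_monoset_subset hg
  have hmono := ncard_image_add_ncard_compl_monoset hF hMF
  have hrange := ncard_compl_range_add_ncard_image hg hF hfg hsub
  have hdiff : (((monoset f)ᶜ.ncard : ℤ) - ((f '' (monoset f)ᶜ).ncard : ℤ)) =
      ((Set.range f)ᶜ.ncard : ℤ) := by
    omega
  exact ⟨hdiff, sub_eq_zero.mpr hdiff⟩

theorem stmt16 [Infinite Ω] (f g : Ω → Ω) (hg : Function.Bijective g)
    (h : AlmostEq f g) :
    (((monoset f)ᶜ.ncard : ℤ) - ((f '' (monoset f)ᶜ).ncard : ℤ)) =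
      ((Set.range f)ᶜ.ncard : ℤ) ∧ ind f = 0 :=
  stmt16_general f g hg h
end
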